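/- arXiv:0909.0991 — 3 statements merged into one kernel-verified Lean document; each statement's English description precedes it below -/
import Mathlib

section
/- For any positive semidefinite matrix S ∈ P_n, the function μ ↦ ⟨Σ(μ), S⟩ (Frobenius inner product) is a negative definite semigroup function on probability measures: for any k, any measures μ_1,…,μ_k with finite moments, and any real c_1,…,c_k with Σ_i c_i = 0, one has Σ_{i,j} c_i c_j ⟨Σ(μ_i + μ_j), S⟩ ≤ 0. -/
open Finset Matrix

noncomputable def meanVec {n : ℕ} (μ : (Fin n → ℝ) →₀ ℝ) : Fin n → ℝ :=
  fun i => ∑ p ∈ μ.support, μ p * p i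

noncomputable def varMat {n : ℕ} (μ : (Fin n → ℝ) →₀ ℝ) : Matrix (Fin n) (Fin n) ℝ :=
  Matrix.of fun i j =>
    (∑ p ∈ μ.support, μ p * p i * p j) - meanVec μ i * meanVec μ j

/-!
Write `m i` for the mean of `μ i` and `M i` for its second-moment matrix. Since the mean is additive,
`⟨Σ(μ i + μ j), S⟩ = ⟨M i, S⟩ + ⟨M j, S⟩ - (m i + m j)ᵀ S (m i + m j)`. Against `c i c j` with
`∑ c i = 0`, every term depending on only one index sums to zero, and the two mixed terms each sum
to `vᵀ S v` with `v = ∑ c i m i`; so the double sum equals `-2 vᵀ S v ≤ 0`.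
-/

section Kernel

variable {ι m R : Type*} [Fintype ι] [Fintype m] [CommRing R]

theorem sum_sum_mul_mul_add_eq_zero {c : ι → R} (hc : ∑ i, c i = 0) (f : ι → R) :
    ∑ i, ∑ j, c i * c j * (f i + f j) = 0 := by
  have hsplit : ∀ i j, c i * c j * (f i + f j) = c i * f i * c j + c i * (c j * f j) :=
    fun i j => by ring
  simp only [hsplit, sum_add_distrib, ← mul_sum, ← sum_mul, hc, mul_zero, zero_mul,
    sum_const_zero, add_zero]

theorem sum_sum_mul_mul_dotProduct_mulVec (c : ι → R) (x : ι → m → R) (S : Matrix m m R) :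
    ∑ i, ∑ j, c i * c j * (x i ⬝ᵥ S *ᵥ x j) =
      (∑ i, c i • x i) ⬝ᵥ S *ᵥ ∑ j, c j • x j := by
  simp only [sum_dotProduct, dotProduct_sum, mulVec_sum, mulVec_smul, smul_dotProduct,
    dotProduct_smul, smul_eq_mul, mul_sum]
  rw [sum_comm]
  exact sum_congr rfl fun i _ => sum_congr rfl fun j _ => by ring

theorem sum_sum_mul_mul_sub_dotProduct_mulVec_add {c : ι → R} (hc : ∑ i, c i = 0)
    (f : ι → R) (x : ι → m → R) (S : Matrix m m R) :
    ∑ i, ∑ j, c i * c j * (f i + f j - (x i + x j) ⬝ᵥ S *ᵥ (x i + x j)) =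
      -2 * ((∑ i, c i • x i) ⬝ᵥ S *ᵥ ∑ i, c i • x i) := by
  set g : ι → R := fun i => f i - x i ⬝ᵥ S *ᵥ x i
  have hexpand : ∀ i j, c i * c j * (f i + f j - (x i + x j) ⬝ᵥ S *ᵥ (x i + x j)) =
      c i * c j * (g i + g j) - c i * c j * (x i ⬝ᵥ S *ᵥ x j)
        - c j * c i * (x j ⬝ᵥ S *ᵥ x i) := by
    intro i j
    simp only [g, mulVec_add, add_dotProduct, dotProduct_add]
    ring
  simp only [hexpand, sum_sub_distrib, sum_sum_mul_mul_add_eq_zero hc]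
  rw [sum_comm (f := fun i j => c j * c i * _), sum_sum_mul_mul_dotProduct_mulVec]
  ring

end Kernel

theorem trace_transpose_vecMulVec_mul {m R : Type*} [Fintype m] [CommRing R]
    (u v : m → R) (S : Matrix m m R) :
    ((vecMulVec u v)ᵀ * S).trace = u ⬝ᵥ S *ᵥ v := by
  rw [transpose_vecMulVec, vecMulVec_mul, trace_vecMulVec, dotProduct_comm, dotProduct_mulVec]

theorem Finsupp.sum_support_add_mul {α R : Type*} [Semiring R] (μ ν : α →₀ R) (f : α → R) :
    ∑ p ∈ (μ + ν).support, (μ + ν) p * f p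
      = ∑ p ∈ μ.support, μ p * f p + ∑ p ∈ ν.support, ν p * f p :=
  Finsupp.sum_add_index' (h := fun p r => r * f p) (fun _ => zero_mul _)
    (fun _ _ _ => add_mul _ _ _)

noncomputable def secondMomentMat {n : ℕ} (μ : (Fin n → ℝ) →₀ ℝ) : Matrix (Fin n) (Fin n) ℝ :=
  Matrix.of fun i j => ∑ p ∈ μ.support, μ p * p i * p j

section Moments

variable {n : ℕ} (μ ν : (Fin n → ℝ) →₀ ℝ)

theorem varMat_eq_secondMomentMat_sub :
    varMat μ = secondMomentMat μ - vecMulVec (meanVec μ) (meanVec μ) := rfl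

theorem meanVec_add : meanVec (μ + ν) = meanVec μ + meanVec ν :=
  funext fun a => Finsupp.sum_support_add_mul μ ν (· a)

theorem secondMomentMat_add :
    secondMomentMat (μ + ν) = secondMomentMat μ + secondMomentMat ν := by
  ext a b
  simpa only [secondMomentMat, of_apply, Matrix.add_apply, mul_assoc] using
    Finsupp.sum_support_add_mul μ ν (fun p => p a * p b)

theorem trace_transpose_varMat_add_mul (S : Matrix (Fin n) (Fin n) ℝ) :
    ((varMat (μ + ν))ᵀ * S).trace = ((secondMomentMat μ)ᵀ * S).trace
      + ((secondMomentMat ν)ᵀ * S).trace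
      - (meanVec μ + meanVec ν) ⬝ᵥ S *ᵥ (meanVec μ + meanVec ν) := by
  rw [varMat_eq_secondMomentMat_sub, secondMomentMat_add, meanVec_add, transpose_sub,
    transpose_add, sub_mul, add_mul, trace_sub, trace_add, trace_transpose_vecMulVec_mul]

end Moments

theorem frobenius_varMat_negDef_general {n k : ℕ} (S : Matrix (Fin n) (Fin n) ℝ)
    (hS : S.PosSemidef) (μ : Fin k → ((Fin n → ℝ) →₀ ℝ))
    (c : Fin k → ℝ) (hc : ∑ i, c i = 0) :
    ∑ i, ∑ j, c i * c j * ((varMat (μ i + μ j))ᵀ * S).trace ≤ 0 := by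
  simp only [trace_transpose_varMat_add_mul]
  rw [sum_sum_mul_mul_sub_dotProduct_mulVec_add hc]
  have hquad := hS.dotProduct_mulVec_nonneg (∑ i, c i • meanVec (μ i))
  rw [star_trivial] at hquad
  linarith

/-- μ ↦ ⟨Σ(μ), S⟩ is a negative definite semigroup function on probability measures. -/
theorem frobenius_varMat_negDef {n k : ℕ} (S : Matrix (Fin n) (Fin n) ℝ)
    (hS : S.PosSemidef) (μ : Fin k → ((Fin n → ℝ) →₀ ℝ))
    (hpos : ∀ i p, 0 ≤ μ i p) (hprob : ∀ i, ∑ p ∈ (μ i).support, μ i p = 1)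
    (c : Fin k → ℝ) (hc : ∑ i, c i = 0) :
    ∑ i, ∑ j, c i * c j * ((varMat (μ i + μ j))ᵀ * S).trace ≤ 0 :=
  frobenius_varMat_negDef_general S hS μ c hc
end

section
/- Let A be an n×n real symmetric positive semidefinite matrix with eigenvalues λ_1,…,λ_n, all satisfying λ_j < 1. Define d_k = (1/2) Σ_{j=1}^n λ_j^k for k ≥ 1, c_0 = 1, and c_k = (1/k) Σ_{r=0}^{k-1} d_{k-r} c_r for k ≥ 1. Then the series Σ_{k=0}^∞ (-1)^k c_k converges, and its value equals Π_{j=1}^n (1 + λ_j)^{-1/2} = det(I + A)^{-1/2}. -/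
/-!
The generating function `C(z) = ∑ cₖ zᵏ` is the unique power series with `C(0) = 1` and
`C' = D C`, where `D(z) = ∑ d_{k+1} zᵏ = ∑ⱼ (λⱼ / 2) / (1 - λⱼ z)`. The binomial series
`(1 - λⱼ z)^(-1/2)` has exactly this logarithmic derivative `(λⱼ / 2) / (1 - λⱼ z)`, and logarithmic
derivatives add under products, so `C = ∏ⱼ (1 - λⱼ z)^(-1/2)` as formal power series. Since
`0 ≤ λⱼ < 1`, every factor converges absolutely at `z = -1`, so the Cauchy product formula gives
`∑ (-1)ᵏ cₖ = ∏ⱼ (1 + λⱼ)^(-1/2)`; finally `det (1 + A) = ∏ⱼ (1 + λⱼ)`.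
-/

open Finset Matrix PowerSeries

namespace PowerSeries

section Algebra

variable {R : Type*} [CommRing R]

theorem derivative_rescale (a : R) (f : R⟦X⟧) :
    d⁄dX R (rescale a f) = C a * rescale a (d⁄dX R f) := by
  ext n
  simp only [coeff_derivative, coeff_rescale, coeff_C_mul, pow_succ]
  ring

theorem derivative_prod_of_derivative_eq_mul {ι : Type*} (s : Finset ι) (f g : ι → R⟦X⟧)
    (h : ∀ i ∈ s, d⁄dX R (f i) = g i * f i) :
    d⁄dX R (∏ i ∈ s, f i) = (∑ i ∈ s, g i) * ∏ i ∈ s, f i := by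
  induction s using Finset.cons_induction with
  | empty => simp
  | cons i s _ ih =>
    rw [prod_cons, sum_cons, Derivation.leibniz, smul_eq_mul, smul_eq_mul,
      ih fun j hj => h j (mem_cons_of_mem hj), h i (mem_cons_self i s)]
    ring

variable [BinomialRing R]

theorem derivative_binomialSeries (r : R) :
    d⁄dX R (binomialSeries R r) = C r * binomialSeries R (r - 1) := by
  ext n
  -- absorption: `(n + 1) • choose r (n + 1) = r * choose (r - 1) n`
  have h := Ring.choose_smul_choose r (Nat.le_add_left 1 n)
  simp only [Nat.choose_one_right, Ring.choose_one_right, Nat.add_sub_cancel,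
    Nat.cast_one] at h
  simp only [coeff_derivative, binomialSeries_coeff, coeff_C_mul, smul_eq_mul, mul_one]
  rw [← h, nsmul_eq_mul, Nat.cast_succ, mul_comm]

theorem binomialSeries_neg_one : binomialSeries R (-1 : R) = mk fun n => (-1) ^ n := by
  ext n
  simp [Ring.choose_neg, Ring.choose_natCast, Units.smul_def]

theorem derivative_binomialSeries_eq_mul (r : R) :
    d⁄dX R (binomialSeries R r) = (C r * mk fun n => (-1) ^ n) * binomialSeries R r := by
  rw [derivative_binomialSeries, ← binomialSeries_neg_one, mul_assoc, ← binomialSeries_add,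
    neg_add_eq_sub]

theorem derivative_rescale_binomialSeries (a r : R) :
    d⁄dX R (rescale a (binomialSeries R r)) =
      (C (a * r) * mk fun n => (-a) ^ n) * rescale a (binomialSeries R r) := by
  have hC : rescale a (C r) = C r := by
    ext n
    cases n <;> simp [coeff_rescale, coeff_C]
  rw [derivative_rescale, derivative_binomialSeries_eq_mul, map_mul, map_mul, rescale_mk, hC,
    map_mul]
  simp only [neg_pow a, mul_comm ((-1 : R) ^ _)]
  ring

end Algebra

section Field

variable {k : Type*} [Field k] [CharZero k]

theorem eq_of_derivative_eq_mul {f₁ f₂ g : k⟦X⟧}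
    (h₁ : d⁄dX k f₁ = g * f₁) (h₂ : d⁄dX k f₂ = g * f₂)
    (hc : constantCoeff f₁ = constantCoeff f₂) (h0 : constantCoeff f₂ ≠ 0) : f₁ = f₂ := by
  have hinv : f₂ * f₂⁻¹ = 1 := PowerSeries.mul_inv_cancel f₂ h0
  have hquot : f₁ * f₂⁻¹ = 1 := by
    refine derivative.ext ?_ ?_
    · rw [Derivation.leibniz, derivative_inv', h₁, h₂, derivative_one, smul_eq_mul, smul_eq_mul]
      linear_combination (-(g * f₁ * f₂⁻¹)) * hinv
    · rw [map_mul, constantCoeff_inv, hc, map_one, mul_inv_cancel₀ h0]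
  linear_combination f₂ * hquot - f₁ * hinv

theorem derivative_mk_eq_mul {c d : ℕ → k}
    (hc : ∀ n, c (n + 1) = 1 / ((n : k) + 1) * ∑ r ∈ range (n + 1), d (n + 1 - r) * c r) :
    d⁄dX k (mk c) = mk (fun n => d (n + 1)) * mk c := by
  ext n
  rw [coeff_derivative, coeff_mk, coeff_mul, ← Nat.sum_antidiagonal_swap]
  simp only [Prod.fst_swap, Prod.snd_swap, coeff_mk]
  rw [Nat.sum_antidiagonal_eq_sum_range_succ (fun i j => d (j + 1) * c i), hc n]
  have hn : (n : k) + 1 ≠ 0 := n.cast_add_one_ne_zero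
  field_simp
  refine sum_congr rfl fun r hr => ?_
  rw [Nat.sub_add_comm (mem_range_succ_iff.mp hr)]

end Field

section Normed

variable {R : Type*} [NormedCommRing R]

theorem summable_norm_coeff_mul {f g : R⟦X⟧} (hf : Summable fun n => ‖coeff n f‖)
    (hg : Summable fun n => ‖coeff n g‖) : Summable fun n => ‖coeff n (f * g)‖ := by
  simpa only [coeff_mul] using summable_norm_sum_mul_antidiagonal_of_summable_norm hf hg

theorem hasSum_coeff_mul [CompleteSpace R] {f g : R⟦X⟧} {a b : R}
    (hf : Summable fun n => ‖coeff n f‖) (hg : Summable fun n => ‖coeff n g‖)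
    (ha : HasSum (fun n => coeff n f) a) (hb : HasSum (fun n => coeff n g) b) :
    HasSum (fun n => coeff n (f * g)) (a * b) := by
  rw [← ha.tsum_eq, ← hb.tsum_eq, tsum_mul_tsum_eq_tsum_sum_antidiagonal_of_summable_norm hf hg]
  simpa only [coeff_mul] using (summable_norm_coeff_mul hf hg).of_norm.hasSum

theorem hasSum_coeff_prod [CompleteSpace R] {ι : Type*} (s : Finset ι)
    {f : ι → R⟦X⟧} {a : ι → R}
    (h : ∀ i ∈ s, Summable (fun n => ‖coeff n (f i)‖) ∧ HasSum (fun n => coeff n (f i)) (a i)) :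
    Summable (fun n => ‖coeff n (∏ i ∈ s, f i)‖) ∧
      HasSum (fun n => coeff n (∏ i ∈ s, f i)) (∏ i ∈ s, a i) := by
  induction s using Finset.cons_induction with
  | empty =>
    simp only [prod_empty, coeff_one]
    exact ⟨summable_of_ne_finset_zero (s := {0}) (by simp_all), hasSum_ite_eq 0 1⟩
  | cons i s _ ih =>
    obtain ⟨hfi, hai⟩ := h i (mem_cons_self i s)
    obtain ⟨hfs, has⟩ := ih fun j hj => h j (mem_cons_of_mem hj)
    simp only [prod_cons]
    exact ⟨summable_norm_coeff_mul hfi hfs, hasSum_coeff_mul hfi hfs hai has⟩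

end Normed

theorem coeff_rescale_binomialSeries (a x : ℝ) (n : ℕ) :
    coeff n (rescale x (binomialSeries ℝ a)) = _root_.binomialSeries ℝ a n fun _ => x := by
  simp [coeff_rescale, mul_comm, -FormalMultilinearSeries.apply_eq_prod_smul_coeff]

theorem hasSum_coeff_rescale_binomialSeries {a x : ℝ} (hx : |x| < 1) :
    Summable (fun n => ‖coeff n (rescale x (binomialSeries ℝ a))‖) ∧
      HasSum (fun n => coeff n (rescale x (binomialSeries ℝ a))) ((1 + x) ^ a) := by
  have hp := Real.one_add_rpow_hasFPowerSeriesOnBall_zero (a := a)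
  have hx' : x ∈ Metric.eball (0 : ℝ) 1 := by
    simpa [Metric.mem_eball, edist_dist, Real.dist_eq] using hx
  simp only [coeff_rescale_binomialSeries]
  refine ⟨(_root_.binomialSeries ℝ a).summable_norm_apply ?_, by simpa using hp.hasSum hx'⟩
  exact Metric.eball_subset_eball hp.r_le hx'

end PowerSeries

open Polynomial in
theorem Matrix.IsHermitian.det_one_add {𝕜 : Type*} [RCLike 𝕜] {ι : Type*} [Fintype ι]
    [DecidableEq ι] {A : Matrix ι ι 𝕜} (hA : A.IsHermitian) :
    (1 + A).det = ∏ i, (1 + (hA.eigenvalues i : 𝕜)) := by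
  have h := congrArg (eval (-1)) hA.charpoly_eq
  rw [eval_charpoly, eval_prod] at h
  simp only [eval_sub, eval_X, eval_C] at h
  have hneg : scalar ι (-1 : 𝕜) - A = -(1 + A) := by
    rw [map_neg, map_one]; abel
  rw [hneg, det_neg] at h
  have hprod : ∏ i, (-1 - (hA.eigenvalues i : 𝕜)) =
      (-1) ^ Fintype.card ι * ∏ i, (1 + (hA.eigenvalues i : 𝕜)) := by
    rw [← Finset.card_univ, ← prod_const, ← prod_mul_distrib]
    exact prod_congr rfl fun i _ => by ring
  rw [hprod] at h
  exact mul_left_cancel₀ (pow_ne_zero _ (neg_ne_zero.mpr one_ne_zero)) h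

/-- With d_k = (1/2)Σ λ_j^k and c_k the recursion coefficients, if all eigenvalues
of the psd matrix A lie in [0,1), then Σ (-1)^k c_k converges to det(I+A)^{-1/2}. -/
theorem alternating_series_det_inv_sqrt {n : ℕ} (A : Matrix (Fin n) (Fin n) ℝ)
    (hA : A.PosSemidef) (hlt : ∀ j, hA.1.eigenvalues j < 1)
    (d c : ℕ → ℝ)
    (hd : ∀ k, d k = (1 / 2) * ∑ j, hA.1.eigenvalues j ^ k)
    (hc0 : c 0 = 1)
    (hck : ∀ k, c (k + 1) =
      (1 / ((k : ℝ) + 1)) * ∑ r ∈ Finset.range (k + 1), d (k + 1 - r) * c r) :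
    HasSum (fun k => (-1 : ℝ) ^ k * c k) ((1 + A).det ^ (-(1 / 2 : ℝ))) := by
  set μ := hA.1.eigenvalues
  set E : Fin n → ℝ⟦X⟧ := fun j => rescale (-μ j) (binomialSeries ℝ (-(1 / 2) : ℝ))
  have hE : ∀ j ∈ univ, d⁄dX ℝ (E j) = (C (μ j / 2) * mk fun k => μ j ^ k) * E j := by
    intro j _
    rw [derivative_rescale_binomialSeries, neg_neg, neg_mul_neg, mul_one_div]
  have hlogderiv : mk (fun k => d (k + 1)) = ∑ j, C (μ j / 2) * mk fun k => μ j ^ k := by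
    ext k
    simp only [coeff_mk, hd, map_sum, coeff_C_mul, mul_sum]
    exact sum_congr rfl fun j _ => by ring
  have hc : mk c = ∏ j, E j := by
    refine eq_of_derivative_eq_mul (derivative_mk_eq_mul hck) ?_ ?_ ?_
    · rw [hlogderiv]; exact derivative_prod_of_derivative_eq_mul _ _ _ hE
    · simp [E, hc0, ← coeff_zero_eq_constantCoeff_apply, coeff_rescale]
    · simp [E, ← coeff_zero_eq_constantCoeff_apply, coeff_rescale]
  have hsign : (fun k => (-1 : ℝ) ^ k * c k) =
      fun k => coeff k (∏ j, rescale (μ j) (binomialSeries ℝ (-(1 / 2) : ℝ))) := by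
    funext k
    rw [← coeff_mk k c, ← coeff_rescale, hc, map_prod]
    simp only [E, rescale_rescale, neg_mul_neg, mul_one]
  have hsum := (hasSum_coeff_prod univ fun j _ => hasSum_coeff_rescale_binomialSeries
    (a := -(1 / 2)) (abs_lt.mpr ⟨by linarith [hA.eigenvalues_nonneg j], hlt j⟩)).2
  have hdet : (1 + A).det = ∏ j, (1 + μ j) := by simpa using hA.1.det_one_add
  rw [hsign, hdet, ← Real.finsetProd_rpow _ _ fun j _ => by linarith [hA.eigenvalues_nonneg j]]
  exact hsum
end

section
/- Let ψ: U → ℝ be a negative definite semigroup function on a subset U of a real vector space (i.e. Σ_{i,j} c_i c_j ψ(s_i + s_j) ≤ 0 whenever Σ_i c_i = 0 and all s_i + s_j ∈ U). Then for every t > 0, the function s ↦ e^{-t ψ(s)}, restricted to pairs whose sums lie in U, defines a positive definite semigroup function: Σ_{i,j} c_i c_j e^{-t ψ(s_i + s_j)} ≥ 0 for all real c_i (no constraint on Σ c_i), whenever all s_i + s_j ∈ U and additionally 2s_i ∈ U for each i. -/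
/-!
For a conditionally negative semidefinite `K` and a base point `i₀`, the centred kernel
`K i i₀ + K i₀ j - K i j - K i₀ i₀` is positive semidefinite: its row and column `i₀` vanish, so
its quadratic form at `x` equals that at the zero-sum vector `x - (∑ x) • δ_{i₀}`, where it is
minus the form of `K`. By the Schur product theorem entrywise powers of a positive semidefinite
matrix are positive semidefinite, hence so is its entrywise exponential, a series of them with
positive coefficients. Finally `exp (-K i j)` is the entrywise exponential of the centred kernel
times the rank-one kernel `d i * d j` with `d i = exp (K i₀ i₀ / 2 - K i i₀)`, and Schur's theorem
applies once more.
-/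

open Finset Nat
open scoped ComplexOrder

namespace Matrix

variable {ι : Type*} [Fintype ι]

theorem dotProduct_mulVec_eq_sum_sum (M : Matrix ι ι ℝ) (x : ι → ℝ) :
    x ⬝ᵥ (M *ᵥ x) = ∑ i, ∑ j, x i * x j * M i j := by
  simp only [dotProduct, mulVec, mul_sum]
  exact sum_congr rfl fun _ _ => sum_congr rfl fun _ _ => by ring

theorem PosSemidef.map_pow {𝕜 : Type*} [RCLike 𝕜] {A : Matrix ι ι 𝕜} (hA : A.PosSemidef) :
    ∀ n : ℕ, (A.map (· ^ n)).PosSemidef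
  | 0 => by simpa [vecMulVec, map] using posSemidef_vecMulVec_self_star (1 : ι → 𝕜)
  | n + 1 => by
    have hsucc : A.map (· ^ (n + 1)) = A.map (· ^ n) ⊙ A := by ext; simp [pow_succ]
    exact hsucc ▸ (hA.map_pow n).hadamard hA

theorem PosSemidef.map_exp {A : Matrix ι ι ℝ} (hA : A.PosSemidef) :
    (A.map Real.exp).PosSemidef := by
  refine .of_dotProduct_mulVec_nonneg (hA.isHermitian.map _ fun _ => rfl) fun x => ?_
  have hseries :
      HasSum (fun n => x ⬝ᵥ (A.map (· ^ n) *ᵥ x) / n !) (x ⬝ᵥ (A.map Real.exp *ᵥ x)) := by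
    simp only [dotProduct_mulVec_eq_sum_sum, map_apply, sum_div]
    refine hasSum_sum fun i _ => hasSum_sum fun j _ => ?_
    simpa [Real.exp_eq_exp_ℝ, mul_div_assoc] using
      (NormedSpace.expSeries_div_hasSum_exp (A i j)).mul_left (x i * x j)
  refine hseries.nonneg fun n => div_nonneg ?_ (by positivity)
  simpa using (hA.map_pow n).dotProduct_mulVec_nonneg x

/-- Berg–Christensen–Ressel call such a kernel *negative definite*. -/
def CondNegSemidef (K : Matrix ι ι ℝ) : Prop :=
  K.IsSymm ∧ ∀ c : ι → ℝ, ∑ i, c i = 0 → c ⬝ᵥ (K *ᵥ c) ≤ 0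

theorem CondNegSemidef.smul {K : Matrix ι ι ℝ} (hK : K.CondNegSemidef) {t : ℝ} (ht : 0 ≤ t) :
    (t • K).CondNegSemidef := by
  refine ⟨hK.1.smul t, fun c hc => ?_⟩
  rw [smul_mulVec, dotProduct_smul, smul_eq_mul]
  exact mul_nonpos_of_nonneg_of_nonpos ht (hK.2 c hc)

def centerAt (K : Matrix ι ι ℝ) (i₀ : ι) : Matrix ι ι ℝ :=
  of fun i j => K i i₀ + K i₀ j - K i j - K i₀ i₀

theorem dotProduct_centerAt_mulVec_add_smul_single [DecidableEq ι] (K : Matrix ι ι ℝ) (i₀ : ι)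
    (x : ι → ℝ) (a : ℝ) :
    (x + a • Pi.single i₀ 1) ⬝ᵥ (K.centerAt i₀ *ᵥ (x + a • Pi.single i₀ 1)) =
      x ⬝ᵥ (K.centerAt i₀ *ᵥ x) := by
  have hcol : K.centerAt i₀ *ᵥ Pi.single i₀ 1 = 0 := by ext; simp [centerAt]
  have hrow : Pi.single i₀ 1 ᵥ* K.centerAt i₀ = 0 := by ext; simp [centerAt]
  rw [mulVec_add, mulVec_smul, hcol, smul_zero, add_zero, add_dotProduct, smul_dotProduct,
    dotProduct_mulVec (Pi.single i₀ 1), hrow, zero_dotProduct, smul_zero, add_zero]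

theorem dotProduct_centerAt_mulVec_of_sum_eq_zero (K : Matrix ι ι ℝ) (i₀ : ι) {c : ι → ℝ}
    (hc : ∑ i, c i = 0) : c ⬝ᵥ (K.centerAt i₀ *ᵥ c) = -(c ⬝ᵥ (K *ᵥ c)) := by
  simp only [dotProduct_mulVec_eq_sum_sum, centerAt, of_apply, mul_add, mul_sub, sum_add_distrib,
    sum_sub_distrib, ← sum_mul, mul_assoc, ← mul_sum, hc]
  simp

theorem CondNegSemidef.posSemidef_centerAt {K : Matrix ι ι ℝ} (hK : K.CondNegSemidef) (i₀ : ι) :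
    (K.centerAt i₀).PosSemidef := by
  classical
  refine .of_dotProduct_mulVec_nonneg ?_ fun x => ?_
  · refine isHermitian_iff_isSymm.mpr (IsSymm.ext fun i j => ?_)
    simp only [centerAt, of_apply, hK.1.apply]
    ring
  set c := x - (∑ i, x i) • Pi.single i₀ 1
  have hc : ∑ i, c i = 0 := by simp [c, sum_sub_distrib, ← mul_sum]
  rw [star_trivial, ← sub_add_cancel x ((∑ i, x i) • Pi.single i₀ 1),
    dotProduct_centerAt_mulVec_add_smul_single, dotProduct_centerAt_mulVec_of_sum_eq_zero K i₀ hc,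
    neg_nonneg]
  exact hK.2 c hc

theorem CondNegSemidef.posSemidef_map_exp_neg {K : Matrix ι ι ℝ} (hK : K.CondNegSemidef) :
    (K.map fun k => Real.exp (-k)).PosSemidef := by
  rcases isEmpty_or_nonempty ι with _ | ⟨⟨i₀⟩⟩
  · rw [Subsingleton.elim (K.map _) 0]
    exact .zero
  set d : ι → ℝ := fun i => Real.exp (K i₀ i₀ / 2 - K i i₀)
  have hfactor : K.map (fun k => Real.exp (-k)) = (K.centerAt i₀).map Real.exp ⊙ vecMulVec d d := by
    ext i j
    simp only [map_apply, hadamard_apply, vecMulVec_apply, centerAt, of_apply, d,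
      ← Real.exp_add, hK.1.apply]
    congr 1
    ring
  rw [hfactor]
  simpa only [star_trivial] using (hK.posSemidef_centerAt i₀).map_exp.hadamard (posSemidef_vecMulVec_self_star d)

end Matrix

/-- Schoenberg-type theorem on subsets: if ψ is a negative definite semigroup
function on U ⊆ V, then for every t > 0, s ↦ e^{-tψ(s)} is a positive definite
semigroup function on U. -/
theorem exp_neg_of_negDef_semigroup {V : Type*} [AddCommGroup V] (U : Set V)
    (ψ : V → ℝ)
    (hnd : ∀ (m : ℕ) (s : Fin m → V) (c : Fin m → ℝ), (∑ i, c i = 0) →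
      (∀ i j, s i + s j ∈ U) → ∑ i, ∑ j, c i * c j * ψ (s i + s j) ≤ 0) :
    ∀ t : ℝ, 0 < t → ∀ (m : ℕ) (s : Fin m → V), (∀ i j, s i + s j ∈ U) →
      ∀ c : Fin m → ℝ, 0 ≤ ∑ i, ∑ j, c i * c j * Real.exp (-t * ψ (s i + s j)) := by
  intro t ht m s hs c
  have hK : (Matrix.of fun i j => ψ (s i + s j)).CondNegSemidef := by
    refine ⟨Matrix.IsSymm.ext fun i j => ?_, fun c hc => ?_⟩
    · simp [add_comm]
    · simpa [Matrix.dotProduct_mulVec_eq_sum_sum] using hnd m s c hc hs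
  have hexp := (hK.smul ht.le).posSemidef_map_exp_neg.dotProduct_mulVec_nonneg c
  simpa [Matrix.dotProduct_mulVec_eq_sum_sum, neg_mul] using hexp
end
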